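/- arXiv:2307.14269 — 5 statements merged into one kernel-verified Lean document; each statement's English description precedes it below -/
import Mathlib

section
/- Let D be an N×M real matrix that is a differentiation matrix of order of accuracy R ≥ 1 over distinct abscissas τ_1, …, τ_M (rows evaluated at τ_1, …, τ_N). Then min(N, R) ≤ rank(D) ≤ min(N, M − 1). -/
open Polynomial

/-- `D` is a differentiation matrix of order of accuracy `R` over the abscissas `τ`,
with rows evaluated at the points `σ`: applying `D` to the samples of any polynomial
of degree at most `R` yields the samples of its derivative. -/
def IsDiffMatrixOn {N M : ℕ} (D : Matrix (Fin N) (Fin M) ℝ) (τ : Fin M → ℝ)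
    (σ : Fin N → ℝ) (R : ℕ) : Prop :=
  ∀ p : Polynomial ℝ, p.natDegree ≤ R → ∀ k : Fin N,
    ∑ i, D k i * p.eval (τ i) = (Polynomial.derivative p).eval (σ k)

/-!
The constant polynomial is differentiated to zero, so the all-ones vector lies in the kernel of
`D` and `rank D ≤ M - 1`. Applying `D` to the samples of `X, X², …, Xᵐ` with `m = min N R`
produces the `N × m` matrix `((j + 1) σₖ ^ j)`, a tall Vandermonde matrix at distinct nodes
with rescaled columns; its top `m × m` block is invertible, so `m ≤ rank D`.
-/

open Matrix

namespace Matrix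

theorem rank_lt_card_width_of_mulVec_eq_zero {K m n : Type*} [Field K] [Fintype n]
    {A : Matrix m n K} {v : n → K} (hv : v ≠ 0) (hAv : A *ᵥ v = 0) :
    A.rank < Fintype.card n := by
  have hker : 0 < Module.finrank K (LinearMap.ker A.mulVecLin) :=
    Module.finrank_pos_iff_exists_ne_zero.mpr ⟨⟨v, hAv⟩, fun h => hv (congrArg Subtype.val h)⟩
  have := LinearMap.finrank_range_add_finrank_ker A.mulVecLin
  rw [Module.finrank_fintype_fun_eq_card] at this
  unfold rank
  omega

/-- `rectVandermonde σ 1 m` is the tall Vandermonde matrix `(σ k ^ j)`. -/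
theorem rank_rectVandermonde_one {R : Type*} [CommRing R] [IsDomain R] {N m : ℕ}
    {σ : Fin N → R} (hσ : Function.Injective σ) (hm : m ≤ N) :
    (rectVandermonde σ 1 m).rank = m := by
  refine le_antisymm (rank_le_width _) ?_
  have hsub : (rectVandermonde σ 1 m).submatrix (Fin.castLE hm) id =
      vandermonde (σ ∘ Fin.castLE hm) := by
    ext k j
    simp [rectVandermonde_apply, vandermonde_apply]
  have hdet : (vandermonde (σ ∘ Fin.castLE hm)).det ≠ 0 :=
    det_vandermonde_ne_zero_iff.mpr (hσ.comp (Fin.castLE_injective hm))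
  calc m = (vandermonde (σ ∘ Fin.castLE hm)).rank := by
        rw [rank_of_det_ne_zero hdet, Fintype.card_fin]
    _ ≤ (rectVandermonde σ 1 m).rank := hsub ▸ rank_submatrix_le _ _ _

end Matrix

namespace IsDiffMatrixOn

variable {N M R : ℕ} {D : Matrix (Fin N) (Fin M) ℝ} {τ : Fin M → ℝ} {σ : Fin N → ℝ}

theorem mulVec_eval (hD : IsDiffMatrixOn D τ σ R) {p : ℝ[X]} (hp : p.natDegree ≤ R) :
    D *ᵥ (fun i => p.eval (τ i)) = fun k => (derivative p).eval (σ k) :=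
  funext (hD p hp)

theorem mulVec_one (hD : IsDiffMatrixOn D τ σ R) : D *ᵥ 1 = 0 := by
  have := hD.mulVec_eval (p := 1) (by simp)
  simp only [eval_one, derivative_one, eval_zero] at this
  exact this

theorem rank_le_pred (hD : IsDiffMatrixOn D τ σ R) : D.rank ≤ M - 1 := by
  rcases M with _ | M
  · exact D.rank_le_width
  · have := rank_lt_card_width_of_mulVec_eq_zero one_ne_zero hD.mulVec_one
    rw [Fintype.card_fin] at this
    omega

theorem mul_pow_succ (hD : IsDiffMatrixOn D τ σ R) {m : ℕ} (hm : m ≤ R) :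
    D * of (fun i (j : Fin m) => τ i ^ ((j : ℕ) + 1)) =
      rectVandermonde σ 1 m * diagonal (fun j : Fin m => ((j : ℕ) + 1 : ℝ)) := by
  ext k j
  have := hD (X ^ ((j : ℕ) + 1)) (by rw [natDegree_X_pow]; omega) k
  simp only [eval_pow, eval_X, derivative_X_pow, eval_mul, eval_C, Nat.add_sub_cancel] at this
  rw [mul_diagonal, mul_apply]
  simp only [of_apply, this, rectVandermonde_apply, Pi.one_apply, one_pow, mul_one]
  push_cast
  ring

theorem min_le_rank (hD : IsDiffMatrixOn D τ σ R) (hσ : Function.Injective σ) :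
    min N R ≤ D.rank := by
  set m := min N R
  have hdet : (diagonal (fun j : Fin m => ((j : ℕ) + 1 : ℝ))).det ≠ 0 := by
    rw [det_diagonal]
    exact Finset.prod_ne_zero_iff.mpr fun j _ => by positivity
  calc m = (rectVandermonde σ 1 m).rank :=
        (rank_rectVandermonde_one hσ (min_le_left _ _)).symm
    _ = (D * of (fun i (j : Fin m) => τ i ^ ((j : ℕ) + 1))).rank := by
        rw [hD.mul_pow_succ (min_le_right _ _), rank_mul_eq_left_of_det_ne_zero _ _ hdet]
    _ ≤ D.rank := rank_mul_le_left _ _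

end IsDiffMatrixOn

theorem diffMatrix_rank_bounds_general {N M : ℕ} (hNM : N ≤ M) (R : ℕ)
    (τ : Fin M → ℝ) (hτ : Function.Injective τ)
    (D : Matrix (Fin N) (Fin M) ℝ)
    (hD : IsDiffMatrixOn D τ (fun k => τ (Fin.castLE hNM k)) R) :
    min N R ≤ D.rank ∧ D.rank ≤ min N (M - 1) :=
  ⟨hD.min_le_rank (hτ.comp (Fin.castLE_injective hNM)), le_min D.rank_le_height hD.rank_le_pred⟩

/-- rank bounds for a differentiation matrix:
`min N R ≤ rank D ≤ min N (M - 1)`. -/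
theorem diffMatrix_rank_bounds {N M : ℕ} (hNM : N ≤ M) (R : ℕ) (hR : 1 ≤ R)
    (τ : Fin M → ℝ) (hτ : Function.Injective τ)
    (D : Matrix (Fin N) (Fin M) ℝ)
    (hD : IsDiffMatrixOn D τ (fun k => τ (Fin.castLE hNM k)) R) :
    min N R ≤ D.rank ∧ D.rank ≤ min N (M - 1) :=
  diffMatrix_rank_bounds_general hNM R τ hτ D hD
end

section
/- Let N ≥ 2 and let π ∈ (−1, 1) be a stationary point of the Lobatto polynomial L_N (i.e., L_N'(π) = 0) such that |π| ≤ |σ| for every stationary point σ ∈ (−1, 1) of L_N. Then |L_N(π)| ≥ |L_N(τ)| for all τ ∈ [−1, 1]; that is, the global maximum of |L_N| on [−1,1] is attained at the stationary point of L_N whose abscissa is nearest zero. -/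
open Polynomial

/-- Legendre polynomial of degree `n`, via Rodrigues' formula (normalized so `P_n(1) = 1`). -/
noncomputable def legendreP (n : ℕ) : Polynomial ℝ :=
  Polynomial.C ((2 ^ n * n.factorial : ℝ)⁻¹) * (⇑Polynomial.derivative)^[n] ((X ^ 2 - 1) ^ n)

/-- Lobatto polynomial of degree `N`: `L_N(τ) = (τ² − 1)·P'_{N−1}(τ)`. -/
noncomputable def lobatto (N : ℕ) : Polynomial ℝ :=
  (X ^ 2 - 1) * Polynomial.derivative (legendreP (N - 1))

/-- Lagrange interpolating basis polynomial of index `i` over the nodes `τ`. -/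
noncomputable def lagrangeBasis {M : ℕ} (τ : Fin M → ℝ) (i : Fin M) : Polynomial ℝ :=
  ∏ j ∈ Finset.univ.erase i, (Polynomial.C (τ i - τ j)⁻¹ * (X - Polynomial.C (τ j)))

/-! ### Auxiliary lemmas: iterated derivatives and the Legendre ODE -/

lemma iterD_add (k : ℕ) (p q : ℝ[X]) :
    (⇑derivative)^[k] (p + q) = (⇑derivative)^[k] p + (⇑derivative)^[k] q := by
  induction k generalizing p q with
  | zero => simp
  | succ k ih => simp [Function.iterate_succ_apply, ih]

lemma iterD_Cmul (k : ℕ) (c : ℝ) (p : ℝ[X]) :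
    (⇑derivative)^[k] (C c * p) = C c * (⇑derivative)^[k] p := by
  induction k generalizing p with
  | zero => simp
  | succ k ih => simp [Function.iterate_succ_apply, ih]

lemma iterD_D (k : ℕ) (p : ℝ[X]) :
    (⇑derivative)^[k] (derivative p) = (⇑derivative)^[k+1] p :=
  (Function.iterate_succ_apply _ k p).symm

lemma iterD_X_mul (k : ℕ) (p : ℝ[X]) :
    (⇑derivative)^[k+1] ((X : ℝ[X]) * p) =
      X * (⇑derivative)^[k+1] p + C ((k:ℝ)+1) * (⇑derivative)^[k] p := by
  induction k generalizing p with
  | zero => simp [derivative_mul]; ring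
  | succ k ih =>
    have h0 : derivative ((X : ℝ[X]) * p) = p + X * derivative p := by
      rw [derivative_mul, derivative_X]; ring
    calc (⇑derivative)^[k+1+1] ((X : ℝ[X]) * p)
        = (⇑derivative)^[k+1] (derivative ((X:ℝ[X]) * p)) := Function.iterate_succ_apply _ _ _
      _ = (⇑derivative)^[k+1] p + ((X:ℝ[X]) * (⇑derivative)^[k+1] (derivative p)
            + C ((k:ℝ)+1) * (⇑derivative)^[k] (derivative p)) := by
          rw [h0, iterD_add, ih]
      _ = (⇑derivative)^[k+1] p + ((X:ℝ[X]) * (⇑derivative)^[k+2] p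
            + C ((k:ℝ)+1) * (⇑derivative)^[k+1] p) := by rw [iterD_D, iterD_D]
      _ = X * (⇑derivative)^[k+1+1] p + C ((k:ℝ)+1+1) * (⇑derivative)^[k+1] p := by
          simp only [C_add, C_1, map_ofNat, show k+1+1 = k+2 from rfl]
          ring
    push_cast
    ring

lemma iterD_sq_mul (k : ℕ) (p : ℝ[X]) :
    (⇑derivative)^[k+2] (((X:ℝ[X])^2 - 1) * p) = (X^2-1) * (⇑derivative)^[k+2] p
      + C (2*((k:ℝ)+2)) * X * (⇑derivative)^[k+1] p
      + C (((k:ℝ)+2)*((k:ℝ)+1)) * (⇑derivative)^[k] p := by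
  induction k generalizing p with
  | zero =>
    simp only [show (0:ℕ)+2 = 1+1 from rfl, Function.iterate_succ_apply,
      Function.iterate_zero_apply, Function.iterate_one]
    simp [derivative_mul, derivative_pow]
    simp only [C_add, C_1, map_ofNat]
    ring
  | succ k ih =>
    have hd : derivative (((X:ℝ[X])^2 - 1) * p)
        = C 2 * ((X:ℝ[X]) * p) + ((X:ℝ[X])^2 - 1) * derivative p := by
      rw [derivative_mul]
      simp [derivative_pow]
      ring
    calc (⇑derivative)^[k+1+2] (((X:ℝ[X])^2-1) * p)
        = (⇑derivative)^[k+2] (derivative (((X:ℝ[X])^2-1) * p)) :=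
          Function.iterate_succ_apply _ _ _
      _ = C 2 * (⇑derivative)^[k+2] ((X:ℝ[X]) * p)
          + (⇑derivative)^[k+2] (((X:ℝ[X])^2-1) * derivative p) := by
          rw [hd, iterD_add, iterD_Cmul]
      _ = C 2 * (X * (⇑derivative)^[k+2] p + C (((k+1:ℕ):ℝ)+1) * (⇑derivative)^[k+1] p)
          + ((X^2-1) * (⇑derivative)^[k+2] (derivative p)
            + C (2*((k:ℝ)+2)) * X * (⇑derivative)^[k+1] (derivative p)
            + C (((k:ℝ)+2)*((k:ℝ)+1)) * (⇑derivative)^[k] (derivative p)) := by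
          rw [show k+2 = (k+1)+1 from rfl, iterD_X_mul (k+1) p, ih]
      _ = C 2 * (X * (⇑derivative)^[k+2] p + C (((k+1:ℕ):ℝ)+1) * (⇑derivative)^[k+1] p)
          + ((X^2-1) * (⇑derivative)^[k+3] p
            + C (2*((k:ℝ)+2)) * X * (⇑derivative)^[k+2] p
            + C (((k:ℝ)+2)*((k:ℝ)+1)) * (⇑derivative)^[k+1] p) := by
          rw [iterD_D, iterD_D, iterD_D]
      _ = (X^2-1) * (⇑derivative)^[k+1+2] p
          + C (2*(((k+1:ℕ):ℝ)+2)) * X * (⇑derivative)^[k+1+1] p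
          + C ((((k+1:ℕ):ℝ)+2)*(((k+1:ℕ):ℝ)+1)) * (⇑derivative)^[k+1] p := by
          push_cast
          simp only [show k+1+2 = k+3 from rfl, show k+1+1 = k+2 from rfl,
            C_add, C_1, C_mul, map_ofNat]
          ring

lemma legendre_ode (n : ℕ) (hn : 1 ≤ n) :
    ((X:ℝ[X])^2 - 1) * derivative (derivative (legendreP n))
      + C 2 * X * derivative (legendreP n)
      = C ((n:ℝ)*((n:ℝ)+1)) * legendreP n := by
  obtain ⟨m, rfl⟩ : ∃ m, n = m + 1 := ⟨n - 1, (Nat.succ_pred_eq_of_pos hn).symm⟩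
  set u : ℝ[X] := ((X:ℝ[X])^2 - 1)^(m+1) with hu
  have h1 : ((X:ℝ[X])^2 - 1) * derivative u = C (2*((m:ℝ)+1)) * ((X:ℝ[X]) * u) := by
    rw [hu, derivative_pow]
    simp only [Nat.add_sub_cancel, derivative_sub, derivative_one, derivative_pow,
      derivative_X, Nat.cast_ofNat, pow_one, mul_one, sub_zero]
    push_cast
    simp only [C_add, C_1, C_mul, map_ofNat]
    ring
  have h2 := congrArg ((⇑(derivative (R := ℝ)))^[m+2]) h1
  rw [iterD_sq_mul m (derivative u), iterD_Cmul, iterD_X_mul (m+1) u,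
    iterD_D, iterD_D, iterD_D] at h2
  have hv : ((X:ℝ[X])^2 - 1) * derivative (derivative ((⇑derivative)^[m+1] u))
      + C 2 * X * derivative ((⇑derivative)^[m+1] u)
      = C (((m+1:ℕ):ℝ)*(((m+1:ℕ):ℝ)+1)) * (⇑derivative)^[m+1] u := by
    have e2 : derivative ((⇑derivative)^[m+1] u) = (⇑derivative)^[m+2] u :=
      (Function.iterate_succ_apply' _ _ _).symm
    have e3 : derivative ((⇑derivative)^[m+2] u) = (⇑derivative)^[m+3] u :=
      (Function.iterate_succ_apply' _ _ _).symm
    rw [e2, e3]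
    push_cast
    push_cast at h2
    simp only [C_add, C_1, C_mul, map_ofNat] at h2 ⊢
    linear_combination h2
  show ((X:ℝ[X])^2 - 1) * derivative (derivative (C ((2 ^ (m+1) * (m+1).factorial : ℝ)⁻¹) * (⇑derivative)^[m+1] u))
      + C 2 * X * derivative (C ((2 ^ (m+1) * (m+1).factorial : ℝ)⁻¹) * (⇑derivative)^[m+1] u)
      = C (((m+1:ℕ):ℝ)*(((m+1:ℕ):ℝ)+1)) * (C ((2 ^ (m+1) * (m+1).factorial : ℝ)⁻¹) * (⇑derivative)^[m+1] u)
  rw [derivative_C_mul, derivative_C_mul]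
  linear_combination C ((2 ^ (m+1) * (m+1).factorial : ℝ)⁻¹) * hv

/-! ### The Lobatto polynomial: ODE and energy-function identities -/

lemma lobatto_deriv {N : ℕ} (hN : 2 ≤ N) :
    derivative (lobatto N) = C (((N:ℝ)-1)*(N:ℝ)) * legendreP (N-1) := by
  have hn : 1 ≤ N - 1 := by omega
  have hcast : ((N-1:ℕ):ℝ) = (N:ℝ) - 1 := by
    have : ((N-1:ℕ):ℝ) + 1 = (N:ℝ) := by
      have := Nat.succ_pred_eq_of_pos (show 0 < N by omega)
      exact_mod_cast congrArg (Nat.cast (R := ℝ)) this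
    linarith
  have h := legendre_ode (N-1) hn
  rw [hcast] at h
  unfold lobatto
  rw [derivative_mul]
  have hX : derivative ((X:ℝ[X])^2 - 1) = C 2 * X := by
    simp [derivative_pow]
  rw [hX]
  rw [show ((N:ℝ)-1)*((N:ℝ)-1+1) = ((N:ℝ)-1)*(N:ℝ) by ring] at h
  linear_combination h

lemma lobatto_ode {N : ℕ} (hN : 2 ≤ N) :
    ((X:ℝ[X])^2 - 1) * derivative (derivative (lobatto N))
      = C (((N:ℝ)-1)*(N:ℝ)) * lobatto N := by
  rw [lobatto_deriv hN, derivative_C_mul]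
  unfold lobatto
  ring

lemma Epoly_deriv {N : ℕ} (hN : 2 ≤ N) :
    derivative (C (((N:ℝ)-1)*(N:ℝ)) * (lobatto N)^2
        + (1 - (X:ℝ[X])^2) * (derivative (lobatto N))^2)
      = C (-2 : ℝ) * (X * (derivative (lobatto N))^2) := by
  have h := lobatto_ode hN
  rw [derivative_add, derivative_C_mul, derivative_mul, derivative_pow, derivative_pow]
  simp only [derivative_sub, derivative_one, derivative_X, derivative_X_pow]
  push_cast
  simp only [map_ofNat, C_neg, pow_one]
  linear_combination (-2 * derivative (lobatto N)) * h

/-! ### Parity of the Lobatto polynomial -/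

lemma iterD_comp_neg (k : ℕ) (p : ℝ[X]) :
    (⇑derivative)^[k] (p.comp (-X)) = C ((-1:ℝ)^k) * (((⇑derivative)^[k] p).comp (-X)) := by
  induction k generalizing p with
  | zero => simp
  | succ k ih =>
    rw [Function.iterate_succ_apply, derivative_comp]
    rw [show derivative (-X : ℝ[X]) = C (-1) by simp]
    rw [iterD_Cmul, ih (derivative p), Function.iterate_succ_apply]
    rw [← mul_assoc, ← C_mul]
    congr 2
    ring

lemma legendre_comp_neg (n : ℕ) :
    (legendreP n).comp (-X) = C ((-1:ℝ)^n) * legendreP n := by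
  have hu : (((X:ℝ[X])^2 - 1)^n).comp (-X) = ((X:ℝ[X])^2 - 1)^n := by
    simp [pow_comp, sub_comp, pow_comp, neg_pow]
  have h := iterD_comp_neg n (((X:ℝ[X])^2 - 1)^n)
  rw [hu] at h
  have hsq : C ((-1:ℝ)^n) * C ((-1:ℝ)^n) = 1 := by
    rw [← C_mul, ← pow_add, show n + n = 2*n by ring, pow_mul]
    norm_num
  unfold legendreP
  rw [mul_comp, C_comp]
  rw [show ((⇑derivative)^[n] (((X:ℝ[X]) ^ 2 - 1) ^ n)).comp (-X)
      = C ((-1:ℝ)^n) * (⇑derivative)^[n] (((X:ℝ[X]) ^ 2 - 1) ^ n) by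
    calc ((⇑derivative)^[n] (((X:ℝ[X]) ^ 2 - 1) ^ n)).comp (-X)
        = (C ((-1:ℝ)^n) * C ((-1:ℝ)^n)) * ((⇑derivative)^[n] (((X:ℝ[X]) ^ 2 - 1) ^ n)).comp (-X) := by
          rw [hsq, one_mul]
      _ = C ((-1:ℝ)^n) * (⇑derivative)^[n] (((X:ℝ[X]) ^ 2 - 1) ^ n) := by
          rw [mul_assoc, ← h]]
  ring

lemma deriv_comp_neg_of_comp_neg {p : ℝ[X]} {c : ℝ} (h : p.comp (-X) = C c * p) :
    (derivative p).comp (-X) = C (-c) * derivative p := by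
  have h1 := iterD_comp_neg 1 p
  simp only [Function.iterate_one] at h1
  rw [h, derivative_C_mul] at h1
  have : C (-1:ℝ) * C (-1:ℝ) = 1 := by rw [← C_mul]; norm_num
  calc (derivative p).comp (-X)
      = (C (-1:ℝ) * C (-1:ℝ)) * (derivative p).comp (-X) := by rw [this, one_mul]
    _ = C (-1:ℝ) * (C ((-1:ℝ)^1) * (derivative p).comp (-X)) := by rw [pow_one]; ring
    _ = C (-1:ℝ) * (C c * derivative p) := by rw [← h1]
    _ = C (-c) * derivative p := by rw [← mul_assoc, ← C_mul]; ring_nf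

lemma lobatto_comp_neg (N : ℕ) :
    (lobatto N).comp (-X) = C ((-1:ℝ)^N) * lobatto N := by
  have hP := legendre_comp_neg (N-1)
  have hDP := deriv_comp_neg_of_comp_neg hP
  unfold lobatto
  rw [mul_comp, hDP]
  have hsq : (((X:ℝ[X])^2 - 1)).comp (-X) = (X:ℝ[X])^2 - 1 := by
    simp [sub_comp, pow_comp, neg_pow]
  rw [hsq]
  rcases Nat.even_or_odd N with hE | hO
  · have hN1 : Odd (N - 1) ∨ N = 0 := by
      rcases Nat.eq_zero_or_pos N with h0 | h0
      · right; exact h0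
      · left; exact Nat.Even.sub_odd h0 hE odd_one
    rcases hN1 with h | h
    · rw [h.neg_one_pow, hE.neg_one_pow]; ring_nf
    · subst h
      have h0 : derivative (legendreP 0) = 0 := by
        unfold legendreP; simp
      rw [h0]; simp
  · have hN1 : Even (N - 1) := by
      have := Nat.Odd.sub_odd hO odd_one; exact this
    rw [hN1.neg_one_pow, hO.neg_one_pow]
    ring_nf

lemma lobatto_eval_neg (N : ℕ) (x : ℝ) :
    (lobatto N).eval (-x) = (-1:ℝ)^N * (lobatto N).eval x := by
  have := congrArg (Polynomial.eval x) (lobatto_comp_neg N)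
  rw [eval_comp] at this
  simpa using this

lemma lobatto_deriv_eval_neg (N : ℕ) (x : ℝ) :
    (derivative (lobatto N)).eval (-x) = (-(-1:ℝ)^N) * (derivative (lobatto N)).eval x := by
  have := congrArg (Polynomial.eval x)
    (deriv_comp_neg_of_comp_neg (lobatto_comp_neg N))
  rw [eval_comp] at this
  simpa using this

lemma lobatto_abs_eval_neg (N : ℕ) (x : ℝ) :
    |(lobatto N).eval (-x)| = |(lobatto N).eval x| := by
  rw [lobatto_eval_neg, abs_mul, abs_pow, abs_neg, abs_one, one_pow, one_mul]

/-- the global maximum of `|L_N|` on `[−1,1]` is attained at the stationary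
point of `L_N` in `(−1,1)` whose abscissa is nearest zero. -/
theorem lobatto_abs_max_at_nearest_stationary {N : ℕ} (hN : 2 ≤ N)
    (x0 : ℝ) (hx0 : x0 ∈ Set.Ioo (-1 : ℝ) 1)
    (hstat : (Polynomial.derivative (lobatto N)).eval x0 = 0)
    (hnear : ∀ σ ∈ Set.Ioo (-1 : ℝ) 1,
      (Polynomial.derivative (lobatto N)).eval σ = 0 → |x0| ≤ |σ|) :
    ∀ τ ∈ Set.Icc (-1 : ℝ) 1, |(lobatto N).eval τ| ≤ |(lobatto N).eval x0| := by
  intro τ hτ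
  set K : ℝ := ((N:ℝ)-1)*(N:ℝ) with hKdef
  have hN2 : (2:ℝ) ≤ (N:ℝ) := by exact_mod_cast hN
  have hK : 0 < K := by rw [hKdef]; nlinarith
  set a : ℝ := |x0| with hadef
  have ha1 : a < 1 := abs_lt.mpr ⟨hx0.1, hx0.2⟩
  have ha0 : 0 ≤ a := abs_nonneg x0
  -- the derivative also vanishes at `a = |x0|`, and `|L(a)| = |L(x0)|`
  have hy'a : (derivative (lobatto N)).eval a = 0 := by
    rcases abs_cases x0 with ⟨h1, _⟩ | ⟨h1, _⟩
    · rw [hadef, h1]; exact hstat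
    · rw [hadef, h1, lobatto_deriv_eval_neg, hstat, mul_zero]
  have hyaeq : |(lobatto N).eval a| = |(lobatto N).eval x0| := by
    rcases abs_cases x0 with ⟨h1, _⟩ | ⟨h1, _⟩
    · rw [hadef, h1]
    · rw [hadef, h1, lobatto_abs_eval_neg]
  rcases le_or_gt (|τ|) a with hle | hgt
  · -- |τ| ≤ a : the derivative has constant sign on (−a, a), so L is monotone there
    have hτmem : τ ∈ Set.Icc (-a) a := ⟨(abs_le.mp hle).1, (abs_le.mp hle).2⟩
    have hamem : a ∈ Set.Icc (-a) a := ⟨by linarith, le_refl a⟩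
    have hnamem : -a ∈ Set.Icc (-a) a := ⟨le_refl _, by linarith⟩
    have hnz : ∀ x ∈ Set.Ioo (-a) a, (derivative (lobatto N)).eval x ≠ 0 := by
      intro x hx hx0'
      have hx1 : x ∈ Set.Ioo (-1:ℝ) 1 := ⟨by linarith [hx.1], by linarith [hx.2]⟩
      have h2 : |x| < a := abs_lt.mpr ⟨hx.1, hx.2⟩
      have h3 := hnear x hx1 hx0'
      linarith
    have hcont' : Continuous fun x : ℝ => (derivative (lobatto N)).eval x :=
      (derivative (lobatto N)).continuous
    have hsign : (∀ x ∈ Set.Ioo (-a) a, 0 < (derivative (lobatto N)).eval x) ∨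
        (∀ x ∈ Set.Ioo (-a) a, (derivative (lobatto N )).eval x < 0) := by
      by_contra hcon
      push_neg at hcon
      obtain ⟨⟨s, hs, hs0⟩, ⟨t, ht, ht0⟩⟩ := hcon
      have hs0' : (derivative (lobatto N)).eval s ≤ 0 := hs0
      have ht0' : 0 ≤ (derivative (lobatto N)).eval t := ht0
      have hmem : (0:ℝ) ∈ Set.uIcc ((derivative (lobatto N)).eval s)
          ((derivative (lobatto N)).eval t) := Set.mem_uIcc.mpr (Or.inl ⟨hs0', ht0'⟩)
      obtain ⟨z, hz, hz0⟩ := intermediate_value_uIcc hcont'.continuousOn hmem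
      exact hnz z (Set.OrdConnected.uIcc_subset Set.ordConnected_Ioo hs ht hz) hz0
    have hcontL : ContinuousOn (fun x : ℝ => (lobatto N).eval x) (Set.Icc (-a) a) :=
      ((lobatto N).continuous).continuousOn
    rcases hsign with hpos | hneg
    · have hmono := (strictMonoOn_of_deriv_pos (convex_Icc (-a) a) hcontL
        (by
          rw [interior_Icc]
          intro x hx
          rw [Polynomial.deriv]
          exact hpos x hx)).monotoneOn
      have h1 : (lobatto N).eval (-a) ≤ (lobatto N).eval τ := hmono hnamem hτmem hτmem.1
      have h2 : (lobatto N).eval τ ≤ (lobatto N).eval a := hmono hτmem hamem hτmem.2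
      have h3 := lobatto_abs_eval_neg N a
      rw [hyaeq] at h3
      rw [abs_le]
      constructor
      · have := neg_abs_le ((lobatto N).eval (-a))
        rw [h3] at this
        linarith
      · have := le_abs_self ((lobatto N).eval a)
        rw [hyaeq] at this
        linarith
    · have hanti := (strictAntiOn_of_deriv_neg (convex_Icc (-a) a) hcontL
        (by
          rw [interior_Icc]
          intro x hx
          rw [Polynomial.deriv]
          exact hneg x hx)).antitoneOn
      have h1 : (lobatto N).eval a ≤ (lobatto N).eval τ := hanti hτmem hamem hτmem.2
      have h2 : (lobatto N).eval τ ≤ (lobatto N).eval (-a) := hanti hnamem hτmem hτmem.1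
      have h3 := lobatto_abs_eval_neg N a
      rw [hyaeq] at h3
      rw [abs_le]
      constructor
      · have := neg_abs_le ((lobatto N).eval a)
        rw [hyaeq] at this
        linarith
      · have := le_abs_self ((lobatto N).eval (-a))
        rw [h3] at this
        linarith
  · -- a ≤ |τ| : energy function argument
    set t : ℝ := |τ| with htdef
    have hta : a ≤ t := le_of_lt hgt
    have ht1 : t ≤ 1 := abs_le.mpr ⟨hτ.1, hτ.2⟩
    have ht0 : 0 ≤ t := abs_nonneg τ
    set Ep : ℝ[X] := C K * (lobatto N)^2 + (1 - (X:ℝ[X])^2) * (derivative (lobatto N))^2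
      with hEpdef
    have hEd : derivative Ep = C (-2 : ℝ) * (X * (derivative (lobatto N))^2) := by
      rw [hEpdef]; exact Epoly_deriv hN
    have hanti : AntitoneOn (fun x : ℝ => Ep.eval x) (Set.Icc a 1) := by
      apply antitoneOn_of_deriv_nonpos (convex_Icc a 1) Ep.continuous.continuousOn
        Ep.differentiable.differentiableOn
      intro x hx
      rw [interior_Icc] at hx
      rw [Polynomial.deriv, hEd]
      simp only [eval_mul, eval_C, eval_X, eval_pow]
      have hx0 : 0 ≤ x := le_trans ha0 (le_of_lt hx.1)
      nlinarith [sq_nonneg ((derivative (lobatto N)).eval x)]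
    have hEa : Ep.eval a = K * ((lobatto N).eval a)^2 := by
      rw [hEpdef]
      simp only [eval_add, eval_mul, eval_C, eval_pow, eval_sub, eval_one, eval_X]
      rw [hy'a]
      ring
    have hEt : K * ((lobatto N).eval t)^2 ≤ Ep.eval t := by
      rw [hEpdef]
      simp only [eval_add, eval_mul, eval_C, eval_pow, eval_sub, eval_one, eval_X]
      have h1t : 0 ≤ 1 - t^2 := by nlinarith
      nlinarith [mul_nonneg h1t (sq_nonneg ((derivative (lobatto N)).eval t))]
    have hle : Ep.eval t ≤ Ep.eval a :=
      hanti ⟨le_refl a, ha1.le⟩ ⟨hta, ht1⟩ hta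
    have hsq : ((lobatto N).eval t)^2 ≤ ((lobatto N).eval a)^2 := by
      have : K * ((lobatto N).eval t)^2 ≤ K * ((lobatto N).eval a)^2 := by
        calc K * ((lobatto N).eval t)^2 ≤ Ep.eval t := hEt
          _ ≤ Ep.eval a := hle
          _ = K * ((lobatto N).eval a)^2 := hEa
      exact le_of_mul_le_mul_left this hK
    have hsqτ : ((lobatto N).eval τ)^2 = ((lobatto N).eval t)^2 := by
      rcases abs_cases τ with ⟨h1, _⟩ | ⟨h1, _⟩
      · rw [htdef, h1]
      · rw [htdef, h1, show -τ = -τ from rfl, lobatto_eval_neg]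
        rcases Nat.even_or_odd N with hE | hO
        · rw [hE.neg_one_pow]; ring
        · rw [hO.neg_one_pow]; ring
    have hsqa : ((lobatto N).eval a)^2 = ((lobatto N).eval x0)^2 := by
      rw [← sq_abs ((lobatto N).eval a), ← sq_abs ((lobatto N).eval x0), hyaeq]
    have hfinal : ((lobatto N).eval τ)^2 ≤ ((lobatto N).eval x0)^2 := by
      rw [hsqτ, ← hsqa]; exact hsq
    rw [← sq_abs ((lobatto N).eval τ), ← sq_abs ((lobatto N).eval x0)] at hfinal
    exact (pow_le_pow_iff_left₀ (abs_nonneg _) (abs_nonneg _) two_ne_zero).mp hfinal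
end

section
/- Let N ≥ 2, let τ_1, …, τ_N be the N roots of the Lobatto polynomial L_N, and let τ_ξ ∈ [−1, 1] be a global maximizer of |L_N| over [−1, 1]. Then L_N(τ_ξ) ≠ 0, and the Lagrange basis polynomial l_ξ of index ξ over the N+1 nodes τ_1, …, τ_N, τ_ξ satisfies |l_ξ(τ)| ≤ l_ξ(τ_ξ) = 1 for all τ ∈ [−1, 1]. -/
open Polynomial

lemma monic_sq (n : ℕ) : ((X ^ 2 - 1 : Polynomial ℝ) ^ n).Monic := by
  have h : (X ^ 2 - 1 : Polynomial ℝ) = X ^ 2 - C 1 := by simp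
  rw [h]
  exact (monic_X_pow_sub_C (1:ℝ) two_ne_zero).pow _

lemma legendreP_coeff (n : ℕ) : (legendreP n).coeff n ≠ 0 := by
  have hm := monic_sq n
  have hdeg : ((X ^ 2 - 1 : Polynomial ℝ) ^ n).natDegree = 2 * n := by
    have h : (X ^ 2 - 1 : Polynomial ℝ) = X ^ 2 - C 1 := by simp
    rw [h, natDegree_pow, natDegree_X_pow_sub_C, mul_comm]
  have hc : ((X ^ 2 - 1 : Polynomial ℝ) ^ n).coeff (n + n) = 1 := by
    have := hm.coeff_natDegree
    rwa [hdeg, two_mul] at this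
  unfold legendreP
  rw [coeff_C_mul, coeff_iterate_derivative, hc]
  rw [nsmul_eq_mul, mul_one]
  apply mul_ne_zero
  · positivity
  · exact Nat.cast_ne_zero.2 (by rw [Ne, Nat.descFactorial_eq_zero_iff_lt]; omega)

lemma legendreP_natDegree_le (n : ℕ) : (legendreP n).natDegree ≤ n := by
  unfold legendreP
  refine (natDegree_C_mul_le _ _).trans ?_
  refine (natDegree_iterate_derivative _ _).trans ?_
  have h : (X ^ 2 - 1 : Polynomial ℝ) = X ^ 2 - C 1 := by simp
  rw [h, natDegree_pow, natDegree_X_pow_sub_C, mul_comm]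
  omega

lemma deriv_legendreP_ne_zero {n : ℕ} (hn : 1 ≤ n) :
    Polynomial.derivative (legendreP n) ≠ 0 := by
  intro h
  have hc : (Polynomial.derivative (legendreP n)).coeff (n - 1) = 0 := by rw [h]; simp
  rw [coeff_derivative] at hc
  have hn' : n - 1 + 1 = n := by omega
  rw [hn'] at hc
  have := legendreP_coeff n
  have : (legendreP n).coeff n ≠ 0 := this
  rcases mul_eq_zero.1 hc with h1 | h1
  · exact this h1
  · have : ((n - 1 : ℕ) : ℝ) + 1 > 0 := by positivity
    linarith [this]

lemma lobatto_ne_zero {N : ℕ} (hN : 2 ≤ N) : lobatto N ≠ 0 := by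
  unfold lobatto
  apply mul_ne_zero
  · intro h
    have := congrArg (Polynomial.eval (2:ℝ)) h
    norm_num at this
  · exact deriv_legendreP_ne_zero (by omega)

lemma lobatto_natDegree_le {N : ℕ} (hN : 2 ≤ N) : (lobatto N).natDegree ≤ N := by
  unfold lobatto
  refine (natDegree_mul_le).trans ?_
  have h2 : (X ^ 2 - 1 : Polynomial ℝ) = X ^ 2 - C 1 := by simp
  have hd1 : (X ^ 2 - 1 : Polynomial ℝ).natDegree = 2 := by
    rw [h2, natDegree_X_pow_sub_C]
  have hd2 : (Polynomial.derivative (legendreP (N - 1))).natDegree ≤ N - 2 := by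
    refine (natDegree_derivative_le _).trans ?_
    have := legendreP_natDegree_le (N - 1)
    omega
  omega

/-- if `τ_ξ` is a global maximizer of `|L_N|` over `[−1,1]`, then
`L_N(τ_ξ) ≠ 0` and the exceptional Lagrange basis polynomial over the roots of `L_N`
together with `τ_ξ` satisfies `|l_ξ(τ)| ≤ l_ξ(τ_ξ) = 1` on `[−1,1]`
(mitigation of Runge's phenomenon). -/
theorem runge_mitigation {N : ℕ} (hN : 2 ≤ N)
    (τ : Fin N → ℝ) (hτ : Function.Injective τ)
    (hroots : ∀ k, (lobatto N).eval (τ k) = 0)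
    (τξ : ℝ) (hξ : τξ ∈ Set.Icc (-1 : ℝ) 1)
    (hmax : ∀ t ∈ Set.Icc (-1 : ℝ) 1, |(lobatto N).eval t| ≤ |(lobatto N).eval τξ|) :
    (lobatto N).eval τξ ≠ 0 ∧
      (lagrangeBasis (Fin.snoc τ τξ) (Fin.last N)).eval τξ = 1 ∧
      ∀ t ∈ Set.Icc (-1 : ℝ) 1,
        |(lagrangeBasis (Fin.snoc τ τξ) (Fin.last N)).eval t| ≤ 1 := by
  set p := lobatto N with hp
  have hp0 : p ≠ 0 := lobatto_ne_zero hN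
  have hdegle : p.natDegree ≤ N := lobatto_natDegree_le hN
  -- the multiset of the τ k
  set s : Multiset ℝ := Finset.univ.val.map τ with hs
  have hsnodup : s.Nodup := Multiset.Nodup.map hτ Finset.univ.nodup
  have hscard : Multiset.card s = N := by simp [hs]
  have hsle : s ≤ p.roots := by
    rw [Multiset.le_iff_subset hsnodup]
    intro x hx
    rcases Multiset.mem_map.1 hx with ⟨k, _, rfl⟩
    exact (mem_roots hp0).2 (hroots k)
  have hcard : Multiset.card p.roots = p.natDegree := by
    have h1 : N ≤ Multiset.card p.roots := by
      rw [← hscard]; exact Multiset.card_le_card hsle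
    have h2 : Multiset.card p.roots ≤ p.natDegree := p.card_roots'
    omega
  have hdeg : p.natDegree = N := by
    have h1 : N ≤ Multiset.card p.roots := by
      rw [← hscard]; exact Multiset.card_le_card hsle
    have h2 : Multiset.card p.roots ≤ p.natDegree := p.card_roots'
    omega
  have hroots_eq : p.roots = s := by
    symm
    exact Multiset.eq_of_le_of_card_le hsle (by rw [hcard, hdeg, hscard])
  -- factorization
  set c := p.leadingCoeff with hc
  have hc0 : c ≠ 0 := leadingCoeff_ne_zero.2 hp0
  have hfact : ∀ t : ℝ, p.eval t = c * ∏ k, (t - τ k) := by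
    intro t
    conv_lhs => rw [← C_leadingCoeff_mul_prod_multiset_X_sub_C hcard]
    rw [eval_mul, eval_C, hroots_eq, hs, Multiset.map_map, eval_multiset_prod]
    congr 1
    rw [Multiset.map_map]
    simp [Finset.prod]
  -- eval τξ ≠ 0
  have hξ0 : p.eval τξ ≠ 0 := by
    have hinf : (Set.Icc (-1 : ℝ) 1).Infinite := Set.Icc_infinite (by norm_num)
    have : ((Set.Icc (-1 : ℝ) 1) \ {x | p.IsRoot x}).Infinite :=
      hinf.diff (Polynomial.finite_setOf_isRoot hp0)
    rcases this.nonempty with ⟨t0, ht0, ht0'⟩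
    intro h
    have := hmax t0 ht0
    rw [h, abs_zero] at this
    exact ht0' (by simpa using abs_nonpos_iff.1 this)
  have hprodξ : (∏ k, (τξ - τ k)) ≠ 0 := by
    intro h
    apply hξ0
    rw [hfact, h, mul_zero]
  -- Lagrange basis eval
  have herase : (Finset.univ.erase (Fin.last N)) =
      Finset.image Fin.castSucc (Finset.univ : Finset (Fin N)) := by
    ext j
    simp only [Finset.mem_erase, Finset.mem_univ, and_true, Finset.mem_image, true_and]
    constructor
    · intro hj
      exact ⟨j.castPred hj, by simp⟩
    · rintro ⟨k, rfl⟩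
      exact Fin.castSucc_lt_last k |>.ne
  have heval : ∀ t : ℝ, (lagrangeBasis (Fin.snoc τ τξ) (Fin.last N)).eval t =
      (∏ k, (τξ - τ k))⁻¹ * ∏ k, (t - τ k) := by
    intro t
    unfold lagrangeBasis
    rw [eval_prod, herase, Finset.prod_image (fun a _ b _ h => Fin.castSucc_injective _ h)]
    simp only [eval_mul, eval_C, eval_sub, eval_X, Fin.snoc_castSucc, Fin.snoc_last]
    rw [Finset.prod_mul_distrib, ← Finset.prod_inv_distrib]
  have hone : (lagrangeBasis (Fin.snoc τ τξ) (Fin.last N)).eval τξ = 1 := by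
    rw [heval, inv_mul_cancel₀ hprodξ]
  refine ⟨hξ0, hone, ?_⟩
  intro t ht
  rw [heval]
  have habs : |(∏ k, (τξ - τ k))⁻¹ * ∏ k, (t - τ k)| =
      |p.eval t| / |p.eval τξ| := by
    rw [hfact t, hfact τξ, abs_mul, abs_mul, abs_inv, abs_mul]
    rw [mul_div_mul_left _ _ (abs_ne_zero.2 hc0)]
    rw [inv_mul_eq_div]
  rw [habs, div_le_one (abs_pos.2 hξ0)]
  exact hmax t ht
end

section
/- Let N ≥ 3, let τ_1, …, τ_N be the N roots of the Lobatto polynomial L_N, let τ_ξ ∈ [−1, 1] be distinct from all of them, and for k ∈ {1, …, N} let l_k be the Lagrange basis polynomial of index k over the N+1 nodes τ_1, …, τ_N, τ_ξ. Let w_k = 2/(N(N−1)·P_{N−1}(τ_k)²) be the Gauss–Lobatto quadrature weights. Then for every real polynomial p of degree at most N − 3 and every k ∈ {1, …, N}, ∫_{−1}^{1} l_k(τ)·p(τ) dτ = w_k·p(τ_k). -/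
/-!
The basis polynomial `l_k` over the `N + 1` nodes has degree `N`, so `l_k · p` has degree at most
`2N - 3` and is integrated exactly by the Gauss–Lobatto rule; as `l_k` vanishes at every Lobatto
node except `τ_k`, where it equals `1`, the rule returns `w_k p(τ_k)`.

Exactness for `y` of degree at most `2N - 3`: the remainder of `y` modulo `L_N` interpolates `y`
at the Lobatto nodes, and the quotient `q` contributes `∫ L_N q = -∫ P_{N-1} ((X² - 1) q)' = 0`
by orthogonality. The integral of the basis polynomial of index `k` over the Lobatto nodes is
`∫ g / L_N'(τ_k)` with `L_N = (X - τ_k) g`; the Legendre equation gives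
`L_N' = N (N - 1) P_{N-1}`, and the Christoffel–Darboux formula writes `P_{N-1}(τ_k) g` as
`Σ_{m<N} (2m + 1) P_m(τ_k) P_m` minus a multiple of `P_{N-1}`, so `P_{N-1}(τ_k) ∫ g = ∫ P_0 = 2`.
-/

open Polynomial

theorem lagrangeBasis_eq_basis {M : ℕ} (τ : Fin M → ℝ) (i : Fin M) :
    lagrangeBasis τ i = Lagrange.basis Finset.univ τ i :=
  rfl

noncomputable def polyIntegral (a b : ℝ) : ℝ[X] →ₗ[ℝ] ℝ where
  toFun p := ∫ t in a..b, p.eval t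
  map_add' p q := by
    simpa only [eval_add] using intervalIntegral.integral_add
      (p.continuous.intervalIntegrable a b) (q.continuous.intervalIntegrable a b)
  map_smul' c p := by simp [intervalIntegral.integral_const_mul]

section PolyIntegral

variable {a b : ℝ}

theorem polyIntegral_apply (p : ℝ[X]) : polyIntegral a b p = ∫ t in a..b, p.eval t :=
  rfl

@[simp]
theorem polyIntegral_C_mul (c : ℝ) (p : ℝ[X]) :
    polyIntegral a b (C c * p) = c * polyIntegral a b p := by
  rw [← smul_eq_C_mul, map_smul, smul_eq_mul]

@[simp]
theorem polyIntegral_one : polyIntegral a b 1 = b - a := by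
  simp [polyIntegral_apply]

theorem polyIntegral_derivative (f : ℝ[X]) :
    polyIntegral a b (derivative f) = f.eval b - f.eval a :=
  intervalIntegral.integral_deriv_eq_sub' _ (funext fun _ => f.deriv)
    (fun _ _ => f.differentiableAt) (derivative f).continuous.continuousOn

theorem polyIntegral_derivative_mul (f g : ℝ[X]) :
    polyIntegral a b (derivative f * g) =
      f.eval b * g.eval b - f.eval a * g.eval a - polyIntegral a b (f * derivative g) := by
  rw [eq_sub_iff_add_eq, ← map_add, ← derivative_mul, polyIntegral_derivative, eval_mul,
    eval_mul]

theorem polyIntegral_iterate_derivative_mul {f : ℝ[X]} {k : ℕ}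
    (hf : ∀ i < k, (derivative^[i] f).eval a = 0 ∧ (derivative^[i] f).eval b = 0) (g : ℝ[X]) :
    polyIntegral a b (derivative^[k] f * g) =
      (-1) ^ k * polyIntegral a b (f * derivative^[k] g) := by
  induction k generalizing g with
  | zero => simp
  | succ k ih =>
    obtain ⟨ha, hb⟩ := hf k k.lt_succ_self
    rw [Function.iterate_succ_apply', polyIntegral_derivative_mul, ha, hb,
      ih (fun i hi => hf i (hi.trans k.lt_succ_self)), Function.iterate_succ_apply]
    ring

end PolyIntegral

theorem eval_iterate_derivative_X_sq_sub_one_pow {a : ℝ} (ha : a ^ 2 = 1) {j n : ℕ}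
    (hj : j < n) : (derivative^[j] ((X ^ 2 - 1 : ℝ[X]) ^ n)).eval a = 0 := by
  obtain ⟨q, hq⟩ := pow_sub_dvd_iterate_derivative_pow (X ^ 2 - 1 : ℝ[X]) n j
  obtain ⟨m, hm⟩ := Nat.exists_eq_add_of_lt hj
  rw [hq, show n - j = m + 1 by omega]
  simp [ha]

-- At `n = 0` the truncated index `n - 1` makes this `1`, which is not a primitive of `P_0`.
noncomputable def legendrePrimitive (n : ℕ) : ℝ[X] :=
  C ((2 ^ n * n.factorial : ℝ)⁻¹) * derivative^[n - 1] ((X ^ 2 - 1) ^ n)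

theorem derivative_legendrePrimitive {n : ℕ} (hn : n ≠ 0) :
    derivative (legendrePrimitive n) = legendreP n := by
  obtain ⟨m, rfl⟩ := Nat.exists_eq_succ_of_ne_zero hn
  rw [legendrePrimitive, legendreP, derivative_C_mul, Nat.succ_sub_one,
    ← Function.iterate_succ_apply' derivative]

theorem legendreP_succ (n : ℕ) :
    legendreP (n + 1) = X * legendreP n + C (n : ℝ) * legendrePrimitive n := by
  have hu : derivative ((X ^ 2 - 1 : ℝ[X]) ^ (n + 1)) =
      C (2 * (n + 1 : ℝ)) * ((X ^ 2 - 1) ^ n * X) := by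
    simp only [derivative_pow, derivative_sub, derivative_one, derivative_X,
      Nat.add_sub_cancel, map_mul, map_add, map_natCast, map_one, map_ofNat]
    push_cast
    ring
  have hc : (2 ^ (n + 1) * (n + 1).factorial : ℝ)⁻¹ * (2 * (n + 1)) =
      (2 ^ n * n.factorial : ℝ)⁻¹ := by
    rw [Nat.factorial_succ]
    push_cast
    field_simp
    ring
  rw [legendreP, Function.iterate_succ_apply, hu, iterate_derivative_C_mul,
    iterate_derivative_mul_X, ← mul_assoc, ← C_mul, hc, legendreP, legendrePrimitive,
    nsmul_eq_mul, map_natCast]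
  ring

theorem X_sq_sub_one_mul_derivative_legendreP (n : ℕ) :
    (X ^ 2 - 1) * derivative (legendreP n) = C ((n : ℝ) * (n + 1)) * legendrePrimitive n := by
  rcases n with _ | m
  · simp [legendreP]
  set u : ℝ[X] := (X ^ 2 - 1) ^ (m + 1)
  have hu : derivative u * X * X - derivative u = C (2 * (m + 1 : ℝ)) * (u * X) := by
    simp only [u, derivative_pow, derivative_sub, derivative_one, derivative_X,
      Nat.add_sub_cancel, map_mul, map_add, map_natCast, map_one, map_ofNat]
    push_cast
    ring
  have key := congrArg (derivative^[m + 1]) hu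
  rw [iterate_derivative_sub, iterate_derivative_mul_X, iterate_derivative_derivative_mul_X,
    Nat.add_sub_cancel, iterate_derivative_derivative_mul_X, iterate_derivative_C_mul,
    iterate_derivative_mul_X, Nat.add_sub_cancel, ← Function.iterate_succ_apply] at key
  rw [legendreP, legendrePrimitive, derivative_C_mul, ← Function.iterate_succ_apply' derivative,
    Nat.add_sub_cancel]
  simp only [nsmul_eq_mul, Nat.succ_eq_add_one, map_mul, map_add, map_natCast, map_one,
    map_ofNat] at key ⊢
  push_cast at key ⊢
  linear_combination C ((2 ^ (m + 1) * (m + 1).factorial : ℝ)⁻¹) * key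

@[simp]
theorem legendreP_zero : legendreP 0 = 1 := by
  simp [legendreP]

@[simp]
theorem legendreP_one : legendreP 1 = X := by
  simpa using legendreP_succ 0

theorem derivative_legendreP_succ (n : ℕ) :
    derivative (legendreP (n + 1)) =
      X * derivative (legendreP n) + C ((n : ℝ) + 1) * legendreP n := by
  rcases eq_or_ne n 0 with rfl | hn
  · simp
  rw [legendreP_succ, derivative_add, derivative_mul, derivative_C_mul,
    derivative_legendrePrimitive hn, derivative_X, map_add, map_one]
  ring

theorem X_sq_sub_one_mul_derivative_legendreP_eq_sub (n : ℕ) :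
    (X ^ 2 - 1) * derivative (legendreP n) =
      C ((n : ℝ) + 1) * (legendreP (n + 1) - X * legendreP n) := by
  rw [X_sq_sub_one_mul_derivative_legendreP, legendreP_succ, map_mul]
  ring

theorem derivative_X_sq_sub_one_mul_derivative_legendreP (n : ℕ) :
    derivative ((X ^ 2 - 1) * derivative (legendreP n)) =
      C ((n : ℝ) * (n + 1)) * legendreP n := by
  rcases eq_or_ne n 0 with rfl | hn
  · simp
  rw [X_sq_sub_one_mul_derivative_legendreP, derivative_C_mul, derivative_legendrePrimitive hn]

theorem legendreP_add_two (n : ℕ) :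
    C ((n : ℝ) + 2) * legendreP (n + 2) =
      C (2 * (n : ℝ) + 3) * (X * legendreP (n + 1)) - C ((n : ℝ) + 1) * legendreP n := by
  have h₁ := X_sq_sub_one_mul_derivative_legendreP_eq_sub (n + 1)
  have h₀ := X_sq_sub_one_mul_derivative_legendreP_eq_sub n
  have hd := derivative_legendreP_succ n
  simp only [map_add, map_mul, map_one, map_ofNat, map_natCast, Nat.cast_add,
    Nat.cast_one] at h₀ h₁ hd ⊢
  linear_combination (X ^ 2 - 1) * hd + X * h₀ - h₁

theorem natDegree_legendreP (n : ℕ) : (legendreP n).natDegree = n := by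
  have hmonic : (X ^ 2 - 1 : ℝ[X]).Monic := by
    simpa using monic_X_pow_sub_C (1 : ℝ) two_ne_zero
  have hdeg : ((X ^ 2 - 1 : ℝ[X]) ^ n).natDegree = n + n := by
    rw [hmonic.natDegree_pow, show (X ^ 2 - 1 : ℝ[X]) = X ^ 2 - C 1 by simp,
      natDegree_X_pow_sub_C]
    ring
  have hcoeff : (derivative^[n] ((X ^ 2 - 1 : ℝ[X]) ^ n)).coeff n ≠ 0 := by
    rw [coeff_iterate_derivative, ← hdeg, (hmonic.pow n).coeff_natDegree, nsmul_one, hdeg]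
    exact_mod_cast (Nat.descFactorial_pos.2 (Nat.le_add_right n n)).ne'
  rw [legendreP, natDegree_C_mul (by positivity)]
  refine le_antisymm ?_ (le_natDegree_of_ne_zero hcoeff)
  exact (natDegree_iterate_derivative _ n).trans (by omega)

theorem polyIntegral_legendreP_mul_eq_zero {n : ℕ} {q : ℝ[X]} (hq : q.natDegree < n) :
    polyIntegral (-1) 1 (legendreP n * q) = 0 := by
  have hboundary : ∀ i < n, (derivative^[i] ((X ^ 2 - 1 : ℝ[X]) ^ n)).eval (-1) = 0 ∧
      (derivative^[i] ((X ^ 2 - 1 : ℝ[X]) ^ n)).eval 1 = 0 := fun i hi =>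
    ⟨eval_iterate_derivative_X_sq_sub_one_pow (by norm_num) hi,
      eval_iterate_derivative_X_sq_sub_one_pow (by norm_num) hi⟩
  rw [legendreP, mul_assoc, polyIntegral_C_mul, polyIntegral_iterate_derivative_mul hboundary,
    iterate_derivative_eq_zero hq]
  simp

theorem polyIntegral_legendreP {n : ℕ} (hn : n ≠ 0) :
    polyIntegral (-1) 1 (legendreP n) = 0 := by
  simpa using polyIntegral_legendreP_mul_eq_zero (q := 1) (by simpa using Nat.pos_of_ne_zero hn)

noncomputable def legendreKernel (n : ℕ) (x : ℝ) : ℝ[X] :=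
  ∑ m ∈ Finset.range (n + 1), C ((2 * m + 1) * (legendreP m).eval x) * legendreP m

theorem X_sub_C_mul_legendreKernel (n : ℕ) (x : ℝ) :
    (X - C x) * legendreKernel n x = C ((n : ℝ) + 1) *
      (legendreP (n + 1) * C ((legendreP n).eval x) -
        legendreP n * C ((legendreP (n + 1)).eval x)) := by
  induction n with
  | zero => simp [legendreKernel]
  | succ n ih =>
    rw [legendreKernel, Finset.sum_range_succ, mul_add, ← legendreKernel, ih]
    have hrec := legendreP_add_two n
    have hrec_x := congrArg C (congrArg (eval x) hrec)
    simp only [eval_mul, eval_C, eval_sub, eval_X] at hrec_x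
    simp only [map_add, map_mul, map_one, map_ofNat, map_sub, map_natCast, Nat.cast_add,
      Nat.cast_one] at hrec hrec_x ⊢
    linear_combination legendreP (n + 1) * hrec_x - C ((legendreP (n + 1)).eval x) * hrec

theorem polyIntegral_legendreKernel (n : ℕ) (x : ℝ) :
    polyIntegral (-1) 1 (legendreKernel n x) = 2 := by
  rw [legendreKernel, map_sum, Finset.sum_eq_single 0]
  · norm_num
  · intro m _ hm
    rw [polyIntegral_C_mul, polyIntegral_legendreP hm, mul_zero]
  · simp

theorem legendreP_eval_mul_polyIntegral_eq_two {n : ℕ} (hn : n ≠ 0) {x : ℝ} {g : ℝ[X]}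
    (hg : (X ^ 2 - 1) * derivative (legendreP n) = (X - C x) * g) :
    (legendreP n).eval x * polyIntegral (-1) 1 g = 2 := by
  have hstar := X_sq_sub_one_mul_derivative_legendreP_eq_sub n
  have hroot : (legendreP (n + 1)).eval x = x * (legendreP n).eval x := by
    have h := congrArg (eval x) (hg.symm.trans hstar)
    simp only [eval_mul, eval_sub, eval_X, eval_C, sub_self, zero_mul] at h
    have : (n : ℝ) + 1 ≠ 0 := by positivity
    linarith [(mul_eq_zero.1 h.symm).resolve_left this]
  have hpoly : C ((legendreP n).eval x) * g =
      legendreKernel n x - C (((n : ℝ) + 1) * (legendreP n).eval x) * legendreP n := by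
    refine mul_left_cancel₀ (X_sub_C_ne_zero x) ?_
    rw [mul_sub, X_sub_C_mul_legendreKernel, hroot, mul_left_comm, ← hg, hstar]
    simp only [map_mul]
    ring
  have hint := congrArg (polyIntegral (-1) 1) hpoly
  rwa [polyIntegral_C_mul, map_sub, polyIntegral_C_mul, polyIntegral_legendreKernel,
    polyIntegral_legendreP hn, mul_zero, sub_zero] at hint

namespace Lagrange

variable {F ι : Type*} [Field F] {s : Finset ι} {v : ι → F} {f : F[X]}

theorem eq_C_leadingCoeff_mul_nodal (hvs : Set.InjOn v s) (hdeg : f.degree = s.card)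
    (hroots : ∀ i ∈ s, f.eval (v i) = 0) : f = C f.leadingCoeff * nodal s v := by
  have hc : f.leadingCoeff ≠ 0 := leadingCoeff_ne_zero.2 (ne_zero_of_coe_le_degree hdeg.ge)
  refine eq_of_degree_le_of_eval_index_eq s hvs hdeg.le ?_ ?_ fun i hi => ?_
  · rw [degree_C_mul hc, degree_nodal, hdeg]
  · rw [leadingCoeff_mul, leadingCoeff_C, nodal_monic.leadingCoeff, mul_one]
  · rw [hroots i hi, eval_mul, eval_nodal_at_node hi, mul_zero]

theorem basis_eq_C_inv_mul_div [DecidableEq ι] {i : ι} (hvs : Set.InjOn v s)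
    (hdeg : f.degree = s.card) (hroots : ∀ i ∈ s, f.eval (v i) = 0) (hi : i ∈ s) :
    Lagrange.basis s v i = C ((derivative f).eval (v i))⁻¹ * (f / (X - C (v i))) := by
  have hc : f.leadingCoeff ≠ 0 := leadingCoeff_ne_zero.2 (ne_zero_of_coe_le_degree hdeg.ge)
  rw [basis_eq_prod_sub_inv_mul_nodal_div hi, nodalWeight_eq_eval_derivative_nodal hi,
    eq_C_leadingCoeff_mul_nodal hvs hdeg hroots, derivative_C_mul,
    EuclideanDomain.mul_div_assoc _ (X_sub_C_dvd_nodal v hi), eval_mul, eval_C, mul_inv,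
    ← mul_assoc, ← C_mul, mul_comm f.leadingCoeff⁻¹, mul_assoc, inv_mul_cancel₀ hc,
    mul_one]

end Lagrange

theorem lobatto_succ (n : ℕ) : lobatto (n + 1) = (X ^ 2 - 1) * derivative (legendreP n) :=
  rfl

theorem degree_lobatto {N : ℕ} (hN : 2 ≤ N) : (lobatto N).degree = N := by
  obtain ⟨n, rfl⟩ := Nat.exists_eq_add_of_le' (show 1 ≤ N by omega)
  have hP : derivative (legendreP n) ≠ 0 := fun h => by
    have := derivative_eq_zero.1 h
    rw [natDegree_legendreP] at this
    omega
  rw [lobatto_succ, degree_mul, degree_eq_natDegree hP, natDegree_derivative, natDegree_legendreP,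
    show (X ^ 2 - 1 : ℝ[X]) = X ^ 2 - C 1 by simp, degree_X_pow_sub_C two_pos]
  norm_cast
  omega

theorem polyIntegral_lobatto_mul_eq_zero {N : ℕ} (hN : 2 ≤ N) {q : ℝ[X]}
    (hq : (lobatto N * q).natDegree ≤ 2 * N - 3) : polyIntegral (-1) 1 (lobatto N * q) = 0 := by
  rcases eq_or_ne q 0 with rfl | hq0
  · simp
  have hL : lobatto N ≠ 0 := ne_zero_of_coe_le_degree (degree_lobatto hN).ge
  rw [natDegree_mul hL hq0, natDegree_eq_of_degree_eq_some (degree_lobatto hN)] at hq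
  obtain ⟨n, rfl⟩ := Nat.exists_eq_add_of_le' (show 1 ≤ N by omega)
  have hdeg : (derivative ((X ^ 2 - 1) * q)).natDegree < n := by
    have hX : (X ^ 2 - 1 : ℝ[X]).natDegree = 2 := by
      rw [show (X ^ 2 - 1 : ℝ[X]) = X ^ 2 - C 1 by simp, natDegree_X_pow_sub_C]
    have := natDegree_mul_le (p := (X ^ 2 - 1 : ℝ[X])) (q := q)
    rw [natDegree_derivative]
    omega
  rw [lobatto_succ, mul_right_comm, mul_comm, polyIntegral_derivative_mul,
    polyIntegral_legendreP_mul_eq_zero hdeg]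
  simp

noncomputable def lobattoWeight (N : ℕ) (x : ℝ) : ℝ :=
  2 / ((N : ℝ) * ((N : ℝ) - 1) * (legendreP (N - 1)).eval x ^ 2)

theorem polyIntegral_basis_eq_lobattoWeight {N : ℕ} (hN : 2 ≤ N) {τ : Fin N → ℝ}
    (hτ : Function.Injective τ) (hroots : ∀ k, (lobatto N).eval (τ k) = 0) (k : Fin N) :
    polyIntegral (-1) 1 (Lagrange.basis Finset.univ τ k) = lobattoWeight N (τ k) := by
  have hdeg : (lobatto N).degree = (Finset.univ : Finset (Fin N)).card := by
    simp [degree_lobatto hN]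
  have hg : lobatto N = (X - C (τ k)) * (lobatto N / (X - C (τ k))) :=
    (EuclideanDomain.mul_div_cancel' (X_sub_C_ne_zero _) (dvd_iff_isRoot.2 (hroots k))).symm
  rw [Lagrange.basis_eq_C_inv_mul_div hτ.injOn hdeg (fun i _ => hroots i) (Finset.mem_univ k),
    polyIntegral_C_mul]
  obtain ⟨n, rfl⟩ := Nat.exists_eq_add_of_le' (show 1 ≤ N by omega)
  have hn : n ≠ 0 := by omega
  have htwo := legendreP_eval_mul_polyIntegral_eq_two hn hg
  have hP : (legendreP n).eval (τ k) ≠ 0 := fun h => by simp [h] at htwo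
  have hderiv : (derivative (lobatto (n + 1))).eval (τ k) =
      n * (n + 1) * (legendreP n).eval (τ k) := by
    rw [lobatto_succ, derivative_X_sq_sub_one_mul_derivative_legendreP, eval_mul, eval_C]
  rw [hderiv, lobattoWeight, Nat.add_sub_cancel]
  push_cast
  rw [add_sub_cancel_right]
  field_simp
  exact htwo

theorem polyIntegral_eq_sum_lobattoWeight {N : ℕ} (hN : 2 ≤ N) {τ : Fin N → ℝ}
    (hτ : Function.Injective τ) (hroots : ∀ k, (lobatto N).eval (τ k) = 0) {y : ℝ[X]}
    (hy : y.natDegree ≤ 2 * N - 3) :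
    polyIntegral (-1) 1 y = ∑ k, lobattoWeight N (τ k) * y.eval (τ k) := by
  have hL0 : lobatto N ≠ 0 := ne_zero_of_coe_le_degree (degree_lobatto hN).ge
  have hL : (lobatto N).natDegree = N := natDegree_eq_of_degree_eq_some (degree_lobatto hN)
  have hsplit : y = lobatto N * (y / lobatto N) + y % lobatto N :=
    (EuclideanDomain.div_add_mod y _).symm
  have hrem_eval (k : Fin N) : (y % lobatto N).eval (τ k) = y.eval (τ k) := by
    conv_rhs => rw [hsplit]
    rw [eval_add, eval_mul, hroots k, zero_mul, zero_add]
  have hrem_interp := Lagrange.eq_interpolate (s := Finset.univ) hτ.injOn (f := y % lobatto N)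
    (by simpa [degree_lobatto hN] using degree_mod_lt y hL0)
  have hquot : polyIntegral (-1) 1 (lobatto N * (y / lobatto N)) = 0 := by
    refine polyIntegral_lobatto_mul_eq_zero hN ?_
    have := natDegree_mod_lt y (q := lobatto N) (by omega)
    rw [eq_sub_of_add_eq hsplit.symm]
    exact (natDegree_sub_le _ _).trans (max_le hy (by omega))
  conv_lhs => rw [hsplit, map_add, hquot, zero_add, hrem_interp, Lagrange.interpolate_apply,
    map_sum]
  refine Finset.sum_congr rfl fun k _ => ?_
  rw [polyIntegral_C_mul, polyIntegral_basis_eq_lobattoWeight hN hτ hroots, hrem_eval, mul_comm]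

theorem lagrange_inner_product_general {N : ℕ} (hN : 3 ≤ N)
    (τ : Fin N → ℝ) (hτ : Function.Injective τ)
    (hroots : ∀ k, (lobatto N).eval (τ k) = 0)
    (τξ : ℝ) (hne : ∀ k, τξ ≠ τ k)
    (w : Fin N → ℝ)
    (hw : ∀ k, w k = 2 / ((N : ℝ) * ((N : ℝ) - 1) * (legendreP (N - 1)).eval (τ k) ^ 2))
    (p : Polynomial ℝ) (hp : p.natDegree ≤ N - 3) (k : Fin N) :
    ∫ t in (-1 : ℝ)..1, (lagrangeBasis (Fin.snoc τ τξ) k.castSucc).eval t * p.eval t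
      = w k * p.eval (τ k) := by
  set v : Fin (N + 1) → ℝ := Fin.snoc τ τξ
  set l := Lagrange.basis Finset.univ v k.castSucc
  have hv : Function.Injective v :=
    Fin.snoc_injective_of_injective hτ fun ⟨j, hj⟩ => hne j hj.symm
  have hdeg : (l * p).natDegree ≤ 2 * N - 3 := by
    refine natDegree_mul_le.trans ?_
    rw [Lagrange.natDegree_basis hv.injOn (Finset.mem_univ _), Finset.card_univ, Fintype.card_fin]
    omega
  have hnode (j : Fin N) : l.eval (τ j) = if j = k then 1 else 0 := by
    split_ifs with h
    · subst h
      simpa [v] using Lagrange.eval_basis_self hv.injOn (Finset.mem_univ j.castSucc)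
    · simpa [v] using Lagrange.eval_basis_of_ne (v := v)
        ((Fin.castSucc_injective N).ne (Ne.symm h)) (Finset.mem_univ j.castSucc)
  calc ∫ t in (-1 : ℝ)..1, (lagrangeBasis v k.castSucc).eval t * p.eval t
      = polyIntegral (-1) 1 (l * p) := by simp [l, lagrangeBasis_eq_basis, polyIntegral_apply]
    _ = ∑ j, lobattoWeight N (τ j) * (l * p).eval (τ j) :=
      polyIntegral_eq_sum_lobattoWeight (by omega) hτ hroots hdeg
    _ = w k * p.eval (τ k) := by simp [hnode, hw, lobattoWeight]

/-- with `τ_1,…,τ_N` the roots of `L_N`, `τ_ξ` an extra node, and the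
Gauss–Lobatto weights `w_k = 2/(N(N−1)·P_{N−1}(τ_k)²)`, one has
`∫_{−1}^{1} l_k(τ)·p(τ) dτ = w_k·p(τ_k)` for every polynomial `p` of degree ≤ `N − 3`. -/
theorem lagrange_inner_product {N : ℕ} (hN : 3 ≤ N)
    (τ : Fin N → ℝ) (hτ : Function.Injective τ)
    (hroots : ∀ k, (lobatto N).eval (τ k) = 0)
    (τξ : ℝ) (hξ : τξ ∈ Set.Icc (-1 : ℝ) 1) (hne : ∀ k, τξ ≠ τ k)
    (w : Fin N → ℝ)
    (hw : ∀ k, w k = 2 / ((N : ℝ) * ((N : ℝ) - 1) * (legendreP (N - 1)).eval (τ k) ^ 2))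
    (p : Polynomial ℝ) (hp : p.natDegree ≤ N - 3) (k : Fin N) :
    ∫ t in (-1 : ℝ)..1, (lagrangeBasis (Fin.snoc τ τξ) k.castSucc).eval t * p.eval t
      = w k * p.eval (τ k) :=
  lagrange_inner_product_general hN τ hτ hroots τξ hne w hw p hp k
end

section
/- Let N ≥ 2, let τ_1, …, τ_N be the N roots of the Lobatto polynomial L_N, and let w_k = 2/(N(N−1)·P_{N−1}(τ_k)²) be the Gauss–Lobatto quadrature weights. If q is a real polynomial of degree at most N − 1 satisfying Σ_{i=1}^{N} w_i·q(τ_i)·P_{N−1}(τ_i) = 0, then q has degree at most N − 2; equivalently, the coefficient of P_{N−1} in the Legendre expansion of q vanishes. In particular, a discrete optimal costate sequence of N samples satisfying the condition Σ_{i} w_i λ_i D_{iξ} = 0 is interpolatable by a polynomial of degree at most N − 2. -/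
open Polynomial

/-! Write `ℓ` for the leading coefficient of `L_N`. Having the `N` distinct roots `τ_i`, `L_N` equals
`ℓ ∏_j (X - τ_j)`, while the Legendre equation `((X² - 1) P_n')' = n(n+1) P_n` (differentiate
`(X² - 1) u' = 2n X u`, `u = (X² - 1)^n`, `n + 1` times) gives `L_N' = N(N-1) P_{N-1}`. Evaluating `L_N'` at a node gives `N(N-1) P_{N-1}(τ_i) = ℓ ∏_{j≠i} (τ_i - τ_j)`,
so `w_i P_{N-1}(τ_i) = (2/ℓ) / ∏_{j≠i} (τ_i - τ_j)`. The quadrature sum is therefore `2/ℓ` times the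
divided difference `∑_i q(τ_i) / ∏_{j≠i} (τ_i - τ_j)`, which is the coefficient of `X^(N-1)` in the
Lagrange interpolant of `q`, that is, in `q` itself. -/

section Rodrigues

variable {R : Type*} [CommRing R]

theorem iterate_derivative_sq_sub_one_mul_derivative (k : ℕ) (f : R[X]) :
    derivative^[k + 1] ((X ^ 2 - 1) * derivative f) =
      (X ^ 2 - 1) * derivative^[k + 2] f + 2 * (k + 1 : R[X]) * X * derivative^[k + 1] f +
        (k * (k + 1) : R[X]) * derivative^[k] f := by
  induction k with
  | zero =>
    simp only [Function.iterate_succ_apply, Function.iterate_zero_apply, derivative_mul,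
      derivative_sub, derivative_X_sq, derivative_one, C_ofNat, Nat.cast_zero]
    ring
  | succ k ih =>
    rw [Function.iterate_succ_apply', ih]
    simp only [Function.iterate_succ_apply', derivative_mul, derivative_add, derivative_sub,
      derivative_X_sq, derivative_X, derivative_one, derivative_ofNat, derivative_natCast, C_ofNat]
    push_cast
    ring

theorem sq_sub_one_mul_derivative_pow (n : ℕ) :
    (X ^ 2 - 1 : R[X]) * derivative ((X ^ 2 - 1) ^ n) =
      ((2 * n : ℕ) : R[X]) * ((X ^ 2 - 1) ^ n * X) := by
  cases n with
  | zero => simp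
  | succ m =>
    rw [derivative_pow, derivative_sub, derivative_X_sq, derivative_one, C_ofNat, C_eq_natCast,
      Nat.add_sub_cancel]
    push_cast
    ring

theorem derivative_sq_sub_one_mul_iterate_derivative_pow (n : ℕ) :
    derivative ((X ^ 2 - 1 : R[X]) * derivative^[n + 1] ((X ^ 2 - 1) ^ n)) =
      (n * (n + 1) : R[X]) * derivative^[n] ((X ^ 2 - 1) ^ n) := by
  have h := congrArg (derivative^[n + 1]) (sq_sub_one_mul_derivative_pow (R := R) n)
  rw [iterate_derivative_sq_sub_one_mul_derivative, iterate_derivative_natCast_mul,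
    iterate_derivative_mul_X] at h
  simp only [derivative_mul, derivative_sub, derivative_X_sq, derivative_one, C_ofNat,
    ← Function.iterate_succ_apply' derivative] at h ⊢
  push_cast at h ⊢
  linear_combination h

end Rodrigues

theorem natDegree_iterate_derivative_eq {R : Type*} [Semiring R] [IsAddTorsionFree R]
    (p : R[X]) (k : ℕ) : (derivative^[k] p).natDegree = p.natDegree - k := by
  induction k with
  | zero => rfl
  | succ k ih => rw [Function.iterate_succ_apply', natDegree_derivative, ih, Nat.sub_sub]

theorem derivative_sq_sub_one_mul_derivative_legendreP (n : ℕ) :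
    derivative ((X ^ 2 - 1) * derivative (legendreP n)) =
      (n * (n + 1) : ℝ[X]) * legendreP n := by
  rw [legendreP, derivative_C_mul, mul_left_comm, derivative_C_mul,
    ← Function.iterate_succ_apply' derivative, derivative_sq_sub_one_mul_iterate_derivative_pow]
  ring

theorem natDegree_lobatto {N : ℕ} (hN : 2 ≤ N) : (lobatto N).natDegree = N := by
  have hP : (derivative (legendreP (N - 1))).natDegree = N - 2 := by
    rw [natDegree_derivative, natDegree_legendreP]; omega
  have hsq : (X ^ 2 - 1 : ℝ[X]).natDegree = 2 := by rw [← C_1, natDegree_X_pow_sub_C]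
  rw [lobatto, natDegree_mul (ne_zero_of_natDegree_gt (n := 0) (by rw [hsq]; omega))
    (by rw [Ne, derivative_eq_zero, natDegree_legendreP]; omega), hsq, hP]
  omega

theorem derivative_lobatto (N : ℕ) :
    derivative (lobatto N) = C ((N : ℝ) * ((N : ℝ) - 1)) * legendreP (N - 1) := by
  rcases N with _ | n
  · simp [lobatto, legendreP]
  · rw [lobatto, derivative_sq_sub_one_mul_derivative_legendreP, Nat.add_sub_cancel]
    simp [mul_comm]

namespace Lagrange

open Finset

variable {F ι : Type*} [Field F] {s : Finset ι} {v : ι → F}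

theorem eq_C_leadingCoeff_mul_nodal_s13 (hvs : Set.InjOn v s) {p : F[X]} (hp : p.natDegree = #s)
    (hroots : ∀ i ∈ s, p.eval (v i) = 0) : p = C p.leadingCoeff * nodal s v := by
  rcases eq_or_ne p 0 with rfl | hp0
  · simp
  refine eq_of_degree_sub_lt_of_eval_index_eq s hvs ?_ fun i hi => by
    simp [hroots i hi, eval_nodal_at_node hi]
  have hdeg : p.degree = #s := by rw [degree_eq_natDegree hp0, hp]
  calc (p - C p.leadingCoeff * nodal s v).degree < p.degree := by
        refine degree_sub_lt_left ?_ hp0 ?_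
        · rw [degree_C_mul (leadingCoeff_ne_zero.mpr hp0), degree_nodal, hdeg]
        · rw [leadingCoeff_mul, leadingCoeff_C, nodal_monic.leadingCoeff, mul_one]
    _ = #s := hdeg

theorem coeff_card_sub_one_eq_sum_nodalWeight_mul_eval [DecidableEq ι] (hvs : Set.InjOn v s)
    {p : F[X]} (hp : p.degree < #s) :
    p.coeff (#s - 1) = ∑ i ∈ s, nodalWeight s v i * p.eval (v i) := by
  conv_lhs => rw [eq_interpolate hvs hp]
  rw [interpolate_apply, finsetSum_coeff]
  refine sum_congr rfl fun i hi => ?_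
  have hmonic : (nodal (s.erase i) v).coeff (#s - 1) = 1 := by
    rw [← card_erase_of_mem hi, ← natDegree_nodal (R := F)]
    exact nodal_monic.coeff_natDegree
  rw [coeff_C_mul, basis_eq_prod_sub_inv_mul_nodal_div hi, ← nodal_erase_eq_nodal_div hi,
    coeff_C_mul, hmonic, mul_one, mul_comm]

end Lagrange

theorem mul_eval_legendreP_eq_div_nodalWeight {N : ℕ} (hN : 2 ≤ N) {τ : Fin N → ℝ}
    (hτ : Function.Injective τ) (hroots : ∀ k, (lobatto N).eval (τ k) = 0) (i : Fin N) :
    (N : ℝ) * ((N : ℝ) - 1) * (legendreP (N - 1)).eval (τ i) =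
      (lobatto N).leadingCoeff / Lagrange.nodalWeight Finset.univ τ i := by
  have hL := Lagrange.eq_C_leadingCoeff_mul_nodal_s13 hτ.injOn (p := lobatto N)
    (by rw [natDegree_lobatto hN, Finset.card_univ, Fintype.card_fin]) fun k _ => hroots k
  have h := congrArg (fun p => (derivative p).eval (τ i)) hL
  simp only [derivative_lobatto, derivative_C_mul, eval_mul, eval_C] at h
  rw [h, Lagrange.nodalWeight_eq_eval_derivative_nodal (Finset.mem_univ i), div_inv_eq_mul]

theorem div_mul_eval_legendreP_eq_nodalWeight {N : ℕ} (hN : 2 ≤ N) {τ : Fin N → ℝ}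
    (hτ : Function.Injective τ) (hroots : ∀ k, (lobatto N).eval (τ k) = 0) (i : Fin N) :
    2 / ((N : ℝ) * ((N : ℝ) - 1) * (legendreP (N - 1)).eval (τ i) ^ 2) *
        (legendreP (N - 1)).eval (τ i) =
      2 / (lobatto N).leadingCoeff * Lagrange.nodalWeight Finset.univ τ i := by
  have h := mul_eval_legendreP_eq_div_nodalWeight hN hτ hroots i
  calc _ = 2 / ((N : ℝ) * ((N : ℝ) - 1) * (legendreP (N - 1)).eval (τ i)) := by
        rcases eq_or_ne ((legendreP (N - 1)).eval (τ i)) 0 with h0 | h0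
        · simp [h0]
        · field_simp
    _ = _ := by rw [h, div_div_eq_mul_div]; ring

/-- if a polynomial `q` of degree at most `N − 1` satisfies the discrete
orthogonality condition `Σ_i w_i·q(τ_i)·P_{N−1}(τ_i) = 0` over the roots of `L_N` with
the Gauss–Lobatto weights, then `q` has degree at most `N − 2`; in particular the
discrete optimal costate sequence is interpolatable by a polynomial of degree `N − 2`. -/
theorem costate_degree {N : ℕ} (hN : 2 ≤ N)
    (τ : Fin N → ℝ) (hτ : Function.Injective τ)
    (hroots : ∀ k, (lobatto N).eval (τ k) = 0)
    (w : Fin N → ℝ)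
    (hw : ∀ k, w k = 2 / ((N : ℝ) * ((N : ℝ) - 1) * (legendreP (N - 1)).eval (τ k) ^ 2))
    (q : Polynomial ℝ) (hq : q.natDegree ≤ N - 1)
    (hsum : ∑ i, w i * q.eval (τ i) * (legendreP (N - 1)).eval (τ i) = 0) :
    q.natDegree ≤ N - 2 := by
  have hl : (lobatto N).leadingCoeff ≠ 0 := leadingCoeff_ne_zero.mpr
    (ne_zero_of_natDegree_gt (n := 0) (by rw [natDegree_lobatto hN]; omega))
  have hdeg : q.degree < (Finset.univ : Finset (Fin N)).card := by
    rw [Finset.card_univ, Fintype.card_fin]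
    exact (degree_le_of_natDegree_le hq).trans_lt (by exact_mod_cast Nat.sub_one_lt (by omega))
  have hcoeff : q.coeff (N - 1) = 0 := by
    have hterm : ∀ i, w i * q.eval (τ i) * (legendreP (N - 1)).eval (τ i) =
        2 / (lobatto N).leadingCoeff * (Lagrange.nodalWeight Finset.univ τ i * q.eval (τ i)) := by
      intro i
      rw [hw i, mul_right_comm, div_mul_eval_legendreP_eq_nodalWeight hN hτ hroots]
      ring
    rw [← Fintype.card_fin N, ← Finset.card_univ,
      Lagrange.coeff_card_sub_one_eq_sum_nodalWeight_mul_eval hτ.injOn hdeg]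
    simpa [Finset.sum_congr rfl fun i _ => hterm i, ← Finset.mul_sum, hl] using hsum
  exact (natDegree_le_pred hq hcoeff).trans_eq (by omega)
end
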